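/- arXiv:math/9805011 — 3 statements merged into one kernel-verified Lean document; each statement's English description precedes it below -/
import Mathlib

section
/- Suppose p : ℝ² → ℝ is a smooth positive solution of the Tzitzeica equation (log p)_xy = p² + c/p for a constant c, and define V = p_xx/p − (1/2)(p_x/p)² and W = p_yy/p − (1/2)(p_y/p)². Then (p, V, W) satisfies the stationary mVN system: p_xxx − 2V p_x − p V_x = p_yyy − 2W p_y − p W_y, V_y = (3/2)(p²)_x, and W_x = (3/2)(p²)_y. -/
noncomputable def px {E : Type*} [NormedAddCommGroup E] [NormedSpace ℝ E]
    (f : ℝ → ℝ → E) : ℝ → ℝ → E := fun x y => deriv (fun x' => f x' y) x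

noncomputable def py {E : Type*} [NormedAddCommGroup E] [NormedSpace ℝ E]
    (f : ℝ → ℝ → E) : ℝ → ℝ → E := fun x y => deriv (fun y' => f x y') y

def Smooth2 {E : Type*} [NormedAddCommGroup E] [NormedSpace ℝ E]
    (f : ℝ → ℝ → E) : Prop := ContDiff ℝ (⊤ : ℕ∞) (fun q : ℝ × ℝ => f q.1 q.2)

section helpers

variable {E : Type*} [NormedAddCommGroup E] [NormedSpace ℝ E] {f : ℝ → ℝ → E}

lemma smooth2_slice_x (hf : Smooth2 f) (y : ℝ) : ContDiff ℝ (⊤ : ℕ∞) (fun x => f x y) :=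
  hf.comp (contDiff_id.prodMk contDiff_const)

lemma smooth2_slice_y (hf : Smooth2 f) (x : ℝ) : ContDiff ℝ (⊤ : ℕ∞) (fun y => f x y) :=
  hf.comp (contDiff_const.prodMk contDiff_id)

lemma diff_slice_x (hf : Smooth2 f) (y x : ℝ) : DifferentiableAt ℝ (fun x' => f x' y) x :=
  (smooth2_slice_x hf y).differentiable (by simp) x

lemma diff_slice_y (hf : Smooth2 f) (x y : ℝ) : DifferentiableAt ℝ (fun y' => f x y') y :=
  (smooth2_slice_y hf x).differentiable (by simp) y

lemma hasDerivAt_slice_x (hf : Smooth2 f) (x y : ℝ) :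
    HasDerivAt (fun x' => f x' y) (px f x y) x :=
  (diff_slice_x hf y x).hasDerivAt

lemma hasDerivAt_slice_y (hf : Smooth2 f) (x y : ℝ) :
    HasDerivAt (fun y' => f x y') (py f x y) y :=
  (diff_slice_y hf x y).hasDerivAt

lemma px_eq_fderiv (hf : Smooth2 f) (x y : ℝ) :
    px f x y = fderiv ℝ (fun q : ℝ × ℝ => f q.1 q.2) (x, y) (1, 0) := by
  have h1 : HasDerivAt (fun x' : ℝ => ((x', y) : ℝ × ℝ)) ((1 : ℝ), (0 : ℝ)) x :=
    (hasDerivAt_id x).prodMk (hasDerivAt_const x y)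
  have h2 := (hf.differentiable (by simp) (x, y)).hasFDerivAt
  exact (h2.comp_hasDerivAt x h1).deriv.symm ▸ rfl

lemma py_eq_fderiv (hf : Smooth2 f) (x y : ℝ) :
    py f x y = fderiv ℝ (fun q : ℝ × ℝ => f q.1 q.2) (x, y) (0, 1) := by
  have h1 : HasDerivAt (fun y' : ℝ => ((x, y') : ℝ × ℝ)) ((0 : ℝ), (1 : ℝ)) y :=
    (hasDerivAt_const y x).prodMk (hasDerivAt_id y)
  have h2 := (hf.differentiable (by simp) (x, y)).hasFDerivAt
  exact (h2.comp_hasDerivAt y h1).deriv.symm ▸ rfl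

lemma smooth2_fderiv (hf : Smooth2 f) :
    ContDiff ℝ (⊤ : ℕ∞) (fderiv ℝ (fun q : ℝ × ℝ => f q.1 q.2)) :=
  hf.fderiv_right (le_of_eq (by simp))

lemma smooth2_px (hf : Smooth2 f) : Smooth2 (px f) := by
  have h : ContDiff ℝ (⊤ : ℕ∞) (fun q : ℝ × ℝ =>
      fderiv ℝ (fun q : ℝ × ℝ => f q.1 q.2) q ((1 : ℝ), (0 : ℝ))) :=
    (smooth2_fderiv hf).clm_apply contDiff_const
  have heq : (fun q : ℝ × ℝ => px f q.1 q.2) = fun q : ℝ × ℝ =>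
      fderiv ℝ (fun q : ℝ × ℝ => f q.1 q.2) q ((1 : ℝ), (0 : ℝ)) :=
    funext fun q => px_eq_fderiv hf q.1 q.2
  rw [Smooth2, heq]; exact h

lemma smooth2_py (hf : Smooth2 f) : Smooth2 (py f) := by
  have h : ContDiff ℝ (⊤ : ℕ∞) (fun q : ℝ × ℝ =>
      fderiv ℝ (fun q : ℝ × ℝ => f q.1 q.2) q ((0 : ℝ), (1 : ℝ))) :=
    (smooth2_fderiv hf).clm_apply contDiff_const
  have heq : (fun q : ℝ × ℝ => py f q.1 q.2) = fun q : ℝ × ℝ =>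
      fderiv ℝ (fun q : ℝ × ℝ => f q.1 q.2) q ((0 : ℝ), (1 : ℝ)) :=
    funext fun q => py_eq_fderiv hf q.1 q.2
  rw [Smooth2, heq]; exact h

lemma clairaut (hf : Smooth2 f) (x y : ℝ) : px (py f) x y = py (px f) x y := by
  set F : ℝ × ℝ → E := fun q => f q.1 q.2 with hF
  set G : ℝ × ℝ → (ℝ × ℝ) →L[ℝ] E := fderiv ℝ F with hG
  have hGsm : ContDiff ℝ (⊤ : ℕ∞) G := smooth2_fderiv hf
  -- px (py f) x y
  have h1 : HasDerivAt (fun x' : ℝ => ((x', y) : ℝ × ℝ)) ((1 : ℝ), (0 : ℝ)) x :=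
    (hasDerivAt_id x).prodMk (hasDerivAt_const x y)
  have h2 : HasDerivAt (fun y' : ℝ => ((x, y') : ℝ × ℝ)) ((0 : ℝ), (1 : ℝ)) y :=
    (hasDerivAt_const y x).prodMk (hasDerivAt_id y)
  have hGd : HasFDerivAt G (fderiv ℝ G (x, y)) (x, y) :=
    ((hGsm.differentiable (by simp)) (x, y)).hasFDerivAt
  have hxy : HasDerivAt (fun x' : ℝ => G (x', y)) (fderiv ℝ G (x, y) ((1 : ℝ), (0 : ℝ))) x :=
    hGd.comp_hasDerivAt x h1
  have hyx : HasDerivAt (fun y' : ℝ => G (x, y')) (fderiv ℝ G (x, y) ((0 : ℝ), (1 : ℝ))) y :=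
    hGd.comp_hasDerivAt y h2
  have e1 : px (py f) x y = fderiv ℝ G (x, y) ((1 : ℝ), (0 : ℝ)) ((0 : ℝ), (1 : ℝ)) := by
    have : (fun x' : ℝ => py f x' y) = fun x' : ℝ => G (x', y) ((0 : ℝ), (1 : ℝ)) :=
      funext fun x' => py_eq_fderiv hf x' y
    have hd := hxy.clm_apply (hasDerivAt_const x ((0 : ℝ), (1 : ℝ)))
    simp only [px, this]
    rw [hd.deriv]; simp
  have e2 : py (px f) x y = fderiv ℝ G (x, y) ((0 : ℝ), (1 : ℝ)) ((1 : ℝ), (0 : ℝ)) := by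
    have : (fun y' : ℝ => px f x y') = fun y' : ℝ => G (x, y') ((1 : ℝ), (0 : ℝ)) :=
      funext fun y' => px_eq_fderiv hf x y'
    have hd := hyx.clm_apply (hasDerivAt_const y ((1 : ℝ), (0 : ℝ)))
    simp only [py, this]
    rw [hd.deriv]; simp
  rw [e1, e2]
  have hsymm : IsSymmSndFDerivAt ℝ F (x, y) :=
    (hf.contDiffAt).isSymmSndFDerivAt (by norm_num; exact WithTop.coe_le_coe.mpr le_top)
  exact hsymm.eq _ _

end helpers

noncomputable def Vf (p : ℝ → ℝ → ℝ) : ℝ → ℝ → ℝ :=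
  fun x y => px (px p) x y / p x y - (1/2) * (px p x y / p x y) ^ 2

lemma key (p : ℝ → ℝ → ℝ) (c : ℝ) (hp : Smooth2 p) (hpos : ∀ x y, 0 < p x y)
    (hTz : ∀ x y, px (py (fun x y => Real.log (p x y))) x y = (p x y) ^ 2 + c / p x y) :
    ∀ x y, py (Vf p) x y = 3 * p x y * px p x y := by
  have hne : ∀ x y, p x y ≠ 0 := fun x y => (hpos x y).ne'
  have hA : Smooth2 (px p) := smooth2_px hp
  have hB : Smooth2 (py p) := smooth2_py hp
  have hAA : Smooth2 (px (px p)) := smooth2_px hA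
  -- step 1 : partial_y (log p) = p_y / p
  have step1 : ∀ x y, py (fun x y => Real.log (p x y)) x y = py p x y / p x y := by
    intro x y
    simp only [py]
    exact ((hasDerivAt_slice_y hp x y).log (hne x y)).deriv
  -- step 2 : (p_y)_x * p = p^4 + c p + p_x p_y
  have step2 : ∀ x y, px (py p) x y * p x y
      = (p x y) ^ 4 + c * p x y + px p x y * py p x y := by
    intro x y
    have h0 := hTz x y
    have hL : px (py (fun x y => Real.log (p x y))) x y
        = (px (py p) x y * p x y - py p x y * px p x y) / (p x y) ^ 2 := by
      have hfun : (fun x' => py (fun x y => Real.log (p x y)) x' y)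
          = fun x' => py p x' y / p x' y := funext fun x' => step1 x' y
      show deriv (fun x' => py (fun x y => Real.log (p x y)) x' y) x = _
      rw [hfun]
      exact ((hasDerivAt_slice_x hB x y).div (hasDerivAt_slice_x hp x y) (hne x y)).deriv
    rw [hL] at h0
    have hpne := hne x y
    field_simp at h0
    have h1 : (px (py p) x y * p x y) * p x y
        = ((p x y) ^ 4 + c * p x y + px p x y * py p x y) * p x y := by
      linear_combination (p x y) * h0
    exact mul_right_cancel₀ hpne h1
  -- step 3 : Clairaut on p
  have step3 : ∀ x y, py (px p) x y = px (py p) x y := fun x y => (clairaut hp x y).symm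
  -- pointwise formula for p_xy
  have step3' : ∀ x y, py (px p) x y
      = ((p x y) ^ 4 + c * p x y + px p x y * py p x y) / p x y := by
    intro x y
    rw [step3 x y, eq_div_iff (hne x y)]
    exact step2 x y
  -- step 4 : p_xxy
  have step4 : ∀ x y, py (px (px p)) x y =
      ((4 * (p x y) ^ 3 * px p x y + c * px p x y
          + (px (px p) x y * py p x y + px p x y * px (py p) x y)) * p x y
        - ((p x y) ^ 4 + c * p x y + px p x y * py p x y) * px p x y) / (p x y) ^ 2 := by
    intro x y
    rw [← clairaut hA x y]
    simp only [px]
    have hfun : (fun x' => py (px p) x' y)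
        = fun x' => ((p x' y) ^ 4 + c * p x' y + px p x' y * py p x' y) / p x' y :=
      funext fun x' => step3' x' y
    rw [hfun]
    have hnum : HasDerivAt (fun x' => (p x' y) ^ 4 + c * p x' y + px p x' y * py p x' y)
        (4 * (p x y) ^ 3 * px p x y + c * px p x y
          + (px (px p) x y * py p x y + px p x y * px (py p) x y)) x := by
      have h1 := (hasDerivAt_slice_x hp x y).pow 4
      have h2 := (hasDerivAt_slice_x hp x y).const_mul c
      have h3 := (hasDerivAt_slice_x hA x y).mul (hasDerivAt_slice_x hB x y)
      have := (h1.add h2).add h3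
      exact this.congr_deriv (by norm_num)
    exact (hnum.div (hasDerivAt_slice_x hp x y) (hne x y)).deriv
  -- step 5 : p_y of the V formula
  intro x y
  have h1 : HasDerivAt (fun y' => px (px p) x y' / p x y')
      ((py (px (px p)) x y * p x y - px (px p) x y * py p x y) / (p x y) ^ 2) y :=
    (hasDerivAt_slice_y hAA x y).div (hasDerivAt_slice_y hp x y) (hne x y)
  have h2 : HasDerivAt (fun y' => px p x y' / p x y')
      ((py (px p) x y * p x y - px p x y * py p x y) / (p x y) ^ 2) y :=
    (hasDerivAt_slice_y hA x y).div (hasDerivAt_slice_y hp x y) (hne x y)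
  have h3 := (h2.pow 2).const_mul ((1:ℝ)/2)
  have h5 := h1.sub h3
  have e5 : py (Vf p) x y
      = (py (px (px p)) x y * p x y - px (px p) x y * py p x y) / (p x y) ^ 2
        - 1/2 * (↑2 * (px p x y / p x y) ^ (2-1)
            * ((py (px p) x y * p x y - px p x y * py p x y) / (p x y) ^ 2)) := by
    simp only [py, Vf]
    exact h5.deriv
  have step2' : px (py p) x y = ((p x y) ^ 4 + c * p x y + px p x y * py p x y) / p x y := by
    rw [eq_div_iff (hne x y)]; exact step2 x y
  rw [e5, step4 x y, step3' x y, step2']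
  have hpne := hne x y
  norm_num
  field_simp
  ring

lemma xzero (p : ℝ → ℝ → ℝ) (hp : Smooth2 p) (hpos : ∀ x y, 0 < p x y) :
    ∀ x y, px (px (px p)) x y - 2 * (Vf p x y) * px p x y - p x y * px (Vf p) x y = 0 := by
  have hne : ∀ x y, p x y ≠ 0 := fun x y => (hpos x y).ne'
  have hA : Smooth2 (px p) := smooth2_px hp
  have hAA : Smooth2 (px (px p)) := smooth2_px hA
  intro x y
  have h1 : HasDerivAt (fun x' => px (px p) x' y / p x' y)
      ((px (px (px p)) x y * p x y - px (px p) x y * px p x y) / (p x y) ^ 2) x :=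
    (hasDerivAt_slice_x hAA x y).div (hasDerivAt_slice_x hp x y) (hne x y)
  have h2 : HasDerivAt (fun x' => px p x' y / p x' y)
      ((px (px p) x y * p x y - px p x y * px p x y) / (p x y) ^ 2) x :=
    (hasDerivAt_slice_x hA x y).div (hasDerivAt_slice_x hp x y) (hne x y)
  have h3 := (h2.pow 2).const_mul ((1:ℝ)/2)
  have h5 := h1.sub h3
  have e : px (Vf p) x y
      = (px (px (px p)) x y * p x y - px (px p) x y * px p x y) / (p x y) ^ 2
        - 1/2 * (↑2 * (px p x y / p x y) ^ (2-1)
            * ((px (px p) x y * p x y - px p x y * px p x y) / (p x y) ^ 2)) := by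
    simp only [px, Vf]
    exact h5.deriv
  rw [e]
  simp only [Vf]
  have hpne := hne x y
  norm_num
  field_simp
  ring


/-- A positive solution of the Tzitzeica equation `(log p)_xy = p^2 + c/p`, with
`V = p_xx/p - (1/2)(p_x/p)^2` and `W = p_yy/p - (1/2)(p_y/p)^2`, gives a
solution of the stationary mVN system (affine spheres). -/
theorem tzitzeica_solves_smVN (p V W : ℝ → ℝ → ℝ) (c : ℝ)
    (hp : Smooth2 p) (hpos : ∀ x y, 0 < p x y)
    (hTz : ∀ x y, px (py (fun x y => Real.log (p x y))) x y = (p x y) ^ 2 + c / p x y)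
    (hV : ∀ x y, V x y = px (px p) x y / p x y - (1/2) * (px p x y / p x y) ^ 2)
    (hW : ∀ x y, W x y = py (py p) x y / p x y - (1/2) * (py p x y / p x y) ^ 2) :
    (∀ x y, px (px (px p)) x y - 2 * V x y * px p x y - p x y * px V x y =
      py (py (py p)) x y - 2 * W x y * py p x y - p x y * py W x y) ∧
    (∀ x y, py V x y = (3/2) * px (fun x y => (p x y) ^ 2) x y) ∧
    (∀ x y, px W x y = (3/2) * py (fun x y => (p x y) ^ 2) x y) := by
  have hne : ∀ x y, p x y ≠ 0 := fun x y => (hpos x y).ne'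
  set ps : ℝ → ℝ → ℝ := fun a b => p b a with hps_def
  have hps : Smooth2 ps := hp.comp (contDiff_snd.prodMk contDiff_fst)
  have hpossw : ∀ x y, 0 < ps x y := fun x y => hpos y x
  have hVf : ∀ x y, V x y = Vf p x y := fun x y => (hV x y).trans rfl
  have hWf : ∀ x y, W x y = Vf ps y x := fun x y => (hW x y).trans rfl
  have hpxV : ∀ x y, px V x y = px (Vf p) x y := fun x y =>
    congrArg (fun g => deriv g x) (funext fun t => hVf t y)
  have hpyV : ∀ x y, py V x y = py (Vf p) x y := fun x y =>
    congrArg (fun g => deriv g y) (funext fun t => hVf x t)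
  have hpxW : ∀ x y, px W x y = py (Vf ps) y x := fun x y =>
    congrArg (fun g => deriv g x) (funext fun t => hWf t y)
  have hpyW : ∀ x y, py W x y = px (Vf ps) y x := fun x y =>
    congrArg (fun g => deriv g y) (funext fun t => hWf x t)
  -- mixed log partials
  have pxL : ∀ a b, px (fun x y => Real.log (p x y)) a b = px p a b / p a b := by
    intro a b
    simp only [px]
    exact ((hasDerivAt_slice_x hp a b).log (hne a b)).deriv
  have pyL : ∀ a b, py (fun x y => Real.log (p x y)) a b = py p a b / p a b := by
    intro a b
    simp only [py]
    exact ((hasDerivAt_slice_y hp a b).log (hne a b)).deriv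
  have hTzs : ∀ x y, px (py (fun x y => Real.log (ps x y))) x y
      = (ps x y) ^ 2 + c / ps x y := by
    intro x y
    show py (px (fun x y => Real.log (p x y))) y x = (p y x) ^ 2 + c / p y x
    have e1 : py (px (fun x y => Real.log (p x y))) y x
        = (py (px p) y x * p y x - px p y x * py p y x) / (p y x) ^ 2 := by
      simp only [py]
      have hfun : (fun t => px (fun x y => Real.log (p x y)) y t)
          = fun t => px p y t / p y t := funext fun t => pxL y t
      rw [hfun]
      exact ((hasDerivAt_slice_y (smooth2_px hp) y x).div
        (hasDerivAt_slice_y hp y x) (hne y x)).deriv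
    have e2 : px (py (fun x y => Real.log (p x y))) y x
        = (px (py p) y x * p y x - py p y x * px p y x) / (p y x) ^ 2 := by
      simp only [px]
      have hfun : (fun t => py (fun x y => Real.log (p x y)) t x)
          = fun t => py p t x / p t x := funext fun t => pyL t x
      rw [hfun]
      exact ((hasDerivAt_slice_x (smooth2_py hp) y x).div
        (hasDerivAt_slice_x hp y x) (hne y x)).deriv
    have := hTz y x
    rw [e2] at this
    rw [e1, ← clairaut hp y x]
    linear_combination this
  have key1 := key p c hp hpos hTz
  have key2 := key ps c hps hpossw hTzs
  refine ⟨?_, ?_, ?_⟩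
  · intro x y
    rw [hV x y, hW x y, hpxV x y, hpyW x y]
    have h1 : px (px (px p)) x y
        - 2 * (px (px p) x y / p x y - 1/2 * (px p x y / p x y) ^ 2) * px p x y
        - p x y * px (Vf p) x y = 0 := xzero p hp hpos x y
    have h2 : py (py (py p)) x y
        - 2 * (py (py p) x y / p x y - 1/2 * (py p x y / p x y) ^ 2) * py p x y
        - p x y * px (Vf ps) y x = 0 := xzero ps hps hpossw y x
    linarith [h1, h2]
  · intro x y
    rw [hpyV x y, key1 x y]
    have e : px (fun x y => (p x y) ^ 2) x y
        = ↑2 * p x y ^ (2-1) * px p x y := by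
      simp only [px]
      exact ((hasDerivAt_slice_x hp x y).pow 2).deriv
    rw [e]
    push_cast
    ring
  · intro x y
    rw [hpxW x y]
    have h2 : py (Vf ps) y x = 3 * p x y * py p x y := key2 y x
    rw [h2]
    have e : py (fun x y => (p x y) ^ 2) x y
        = ↑2 * p x y ^ (2-1) * py p x y := by
      simp only [py]
      exact ((hasDerivAt_slice_y hp x y).pow 2).deriv
    rw [e]
    push_cast
    ring
end

section
/- Let f, g : ℝ → ℝ be smooth with f' > 0, g' > 0 and f(x) + g(y) > 0 on a domain, satisfying (f')³ = (a₀ + a₁ f + a₂ f²)² and (g')³ = (a₀ − a₁ g + a₂ g²)² for constants a₀, a₁, a₂. Define p(x,y) > 0 by p² = (9/4)·f'(x)g'(y)/(f(x)+g(y))². Then p satisfies the system p_xx = −(4/3)p p_y, p_yy = −(4/3)p p_x, and (log p)_xy = (4/9)p² (the equations of the Roman surface of Steiner). -/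
lemma lin_bound {v v' : ℝ → ℝ} {k x₀ x₁ : ℝ} (hx : x₀ ≤ x₁)
    (hd : ∀ x ∈ Set.Icc x₀ x₁, HasDerivAt v (v' x) x)
    (hk : ∀ x ∈ Set.Icc x₀ x₁, v' x ≤ -k) :
    v x₁ ≤ v x₀ - k * (x₁ - x₀) := by
  have hd' : ∀ x ∈ Set.Icc x₀ x₁, HasDerivAt (fun x => v x + k * x) (v' x + k) x := by
    intro x hxm
    have h := (hd x hxm).add ((hasDerivAt_id x).const_mul k)
    simp only [mul_one] at h
    exact h
  have hmono : AntitoneOn (fun x => v x + k * x) (Set.Icc x₀ x₁) := by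
    apply antitoneOn_of_deriv_nonpos (convex_Icc _ _)
    · exact fun x hxm => (hd' x hxm).continuousAt.continuousWithinAt
    · intro x hxm
      rw [interior_Icc] at hxm
      exact (hd' x (Set.Ioo_subset_Icc_self hxm)).differentiableAt.differentiableWithinAt
    · intro x hxm
      rw [interior_Icc] at hxm
      rw [(hd' x (Set.Ioo_subset_Icc_self hxm)).deriv]
      have := hk x (Set.Ioo_subset_Icc_self hxm)
      linarith
  have := hmono (Set.left_mem_Icc.2 hx) (Set.right_mem_Icc.2 hx) hx
  simp only at this
  linarith

/-- A globally defined increasing solution of `(f')³ = Q(f)²` with `Q(f) < 0`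
cannot exist when `a₂ > 0`, or `a₂ = 0 ∧ a₁ > 0`. -/
lemma fwd (a₀ a₁ a₂ : ℝ) (f : ℝ → ℝ) (hf : Differentiable ℝ f)
    (hf' : ∀ x, 0 < deriv f x)
    (hode : ∀ x, deriv f x ^ 3 = (a₀ + a₁ * f x + a₂ * f x ^ 2) ^ 2)
    (hQ : ∀ x, a₀ + a₁ * f x + a₂ * f x ^ 2 < 0)
    (hcase : 0 < a₂ ∨ (a₂ = 0 ∧ 0 < a₁)) : False := by
  have hmono : StrictMono f := strictMono_of_deriv_pos hf'
  -- f is bounded above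
  obtain ⟨M, hM⟩ : ∃ M, ∀ x, f x ≤ M := by
    rcases hcase with h2 | ⟨h20, h1⟩
    · refine ⟨max ((|a₁| + |a₀| + 1)/a₂) 1, fun x => ?_⟩
      by_contra hgt
      push_neg at hgt
      have h1x : 1 < f x := lt_of_le_of_lt (le_max_right _ _) hgt
      have h2x : (|a₁| + |a₀| + 1)/a₂ < f x := lt_of_le_of_lt (le_max_left _ _) hgt
      have h3x : |a₁| + |a₀| + 1 < a₂ * f x := by
        rw [div_lt_iff₀ h2] at h2x; linarith [mul_comm (f x) a₂]
      have := hQ x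
      nlinarith [le_abs_self a₁, neg_abs_le a₁, le_abs_self a₀, neg_abs_le a₀, abs_nonneg a₀]
    · refine ⟨-a₀/a₁, fun x => ?_⟩
      have := hQ x
      rw [le_div_iff₀ h1]
      nlinarith
  have hbdd : BddAbove (Set.range f) := ⟨M, by rintro _ ⟨x, rfl⟩; exact hM x⟩
  set L := ⨆ x, f x with hL
  have htend : Filter.Tendsto f Filter.atTop (nhds L) := tendsto_atTop_ciSup hmono.monotone hbdd
  have hflt : ∀ x, f x < L := fun x => lt_of_lt_of_le (hmono (lt_add_one x)) (le_ciSup hbdd (x+1))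
  -- Q(f x) tends to Q L
  have hQcont : Continuous (fun t : ℝ => a₀ + a₁ * t + a₂ * t ^ 2) := by continuity
  have hQt : Filter.Tendsto (fun x => a₀ + a₁ * f x + a₂ * f x ^ 2) Filter.atTop
      (nhds (a₀ + a₁ * L + a₂ * L ^ 2)) := (hQcont.tendsto L).comp htend
  -- the limit is a root of Q
  have hQL : a₀ + a₁ * L + a₂ * L ^ 2 = 0 := by
    by_contra hne
    set q := a₀ + a₁ * L + a₂ * L ^ 2 with hq
    have hq2 : 0 < q ^ 2 := by positivity
    have hsq : Filter.Tendsto (fun x => (a₀ + a₁ * f x + a₂ * f x ^ 2) ^ 2) Filter.atTop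
        (nhds (q ^ 2)) := hQt.pow 2
    have hev : ∀ᶠ x in Filter.atTop, q ^ 2 / 2 < (a₀ + a₁ * f x + a₂ * f x ^ 2) ^ 2 :=
      hsq.eventually_const_lt (half_lt_self hq2)
    obtain ⟨x₀, hx₀⟩ := Filter.eventually_atTop.1 hev
    set c := (q ^ 2 / 2) ^ ((1:ℝ)/3) with hc
    have hcpos : 0 < c := Real.rpow_pos_of_pos (by positivity) _
    have hc3 : c ^ 3 = q ^ 2 / 2 := by
      rw [hc, ← Real.rpow_natCast ((q^2/2) ^ ((1:ℝ)/3)) 3, ← Real.rpow_mul (by positivity)]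
      norm_num
    -- deriv f ≥ c on [x₀, ∞)
    have hder : ∀ x ∈ Set.Ici x₀, c ≤ deriv f x := by
      intro x hxm
      have h1 : c ^ 3 ≤ deriv f x ^ 3 := by
        rw [hc3, hode x]; exact le_of_lt (hx₀ x hxm)
      exact le_of_pow_le_pow_left₀ (by norm_num) (le_of_lt (hf' x)) h1
    -- then f is unbounded: contradiction
    set x₁ := x₀ + (M + 1 - f x₀)/c with hx₁
    have hnum : 0 ≤ M + 1 - f x₀ := by linarith [hM x₀]
    have hxle : x₀ ≤ x₁ := by
      have : 0 ≤ (M + 1 - f x₀)/c := div_nonneg hnum hcpos.le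
      rw [hx₁]; linarith
    have hlb := lin_bound (v := fun x => M + 1 - f x) (v' := fun x => -(deriv f x))
      (k := c) hxle
      (fun x _ => ((hf x).hasDerivAt).const_sub (M+1))
      (fun x hxm => by
        show -(deriv f x) ≤ -c
        have := hder x (Set.mem_of_mem_of_subset hxm (Set.Icc_subset_Ici_self))
        linarith)
    have h2 : M + 1 - f x₁ ≤ (M + 1 - f x₀) - c * (x₁ - x₀) := hlb
    have hterm : c * (x₁ - x₀) = M + 1 - f x₀ := by
      rw [hx₁]; field_simp; ring
    rw [hterm] at h2
    linarith [hM x₁]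
  -- now L is a root; it must be a simple root
  have hRL : a₁ + 2 * a₂ * L ≠ 0 := by
    rcases hcase with h2 | ⟨h20, h1⟩
    · intro hz
      have hzz : (a₁ + 2*a₂*L) * (f 0 - L) = 0 := by rw [hz]; ring
      nlinarith [hQ 0, mul_nonneg h2.le (sq_nonneg (f 0 - L)), hQL, hzz]
    · rw [h20]; intro hz; simp at hz; linarith
  -- factorization Q t = (t - L) * (a₁ + a₂ * (t + L))
  have hfact : ∀ t : ℝ, a₀ + a₁ * t + a₂ * t ^ 2 = (t - L) * (a₁ + a₂ * (t + L)) := by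
    intro t; linear_combination hQL
  -- eventually |R (f x)| is bounded below
  have hRt : Filter.Tendsto (fun x => |a₁ + a₂ * (f x + L)|) Filter.atTop
      (nhds |a₁ + 2 * a₂ * L|) := by
    have h1 : Filter.Tendsto (fun x => a₁ + a₂ * (f x + L)) Filter.atTop
        (nhds (a₁ + a₂ * (L + L))) := by
      have hcont : Continuous (fun t : ℝ => a₁ + a₂ * (t + L)) := by continuity
      exact (hcont.tendsto L).comp htend
    have : a₁ + a₂ * (L + L) = a₁ + 2 * a₂ * L := by ring
    rw [this] at h1
    exact h1.abs
  set cR := |a₁ + 2 * a₂ * L| / 2 with hcR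
  have hcRpos : 0 < cR := by
    have := abs_pos.2 hRL; rw [hcR]; linarith
  have hev2 : ∀ᶠ x in Filter.atTop, cR < |a₁ + a₂ * (f x + L)| :=
    hRt.eventually_const_lt (by rw [hcR]; linarith [abs_pos.2 hRL])
  obtain ⟨x₀, hx₀⟩ := Filter.eventually_atTop.1 hev2
  -- the Lyapunov function v = (L - f x)^{1/3}
  set k := (cR ^ 2) ^ ((1:ℝ)/3) / 3 with hk
  have hkpos : 0 < k := by
    have : (0:ℝ) < (cR ^ 2) ^ ((1:ℝ)/3) := Real.rpow_pos_of_pos (by positivity) _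
    rw [hk]; linarith
  have hd : ∀ x : ℝ, HasDerivAt (fun x => (L - f x) ^ ((1:ℝ)/3))
      ((1/3) * (L - f x) ^ ((1:ℝ)/3 - 1) * (-(deriv f x))) x := by
    intro x
    have hpos : 0 < L - f x := sub_pos.2 (hflt x)
    have hinner : HasDerivAt (fun x => L - f x) (-(deriv f x)) x :=
      ((hf x).hasDerivAt).const_sub L
    exact (Real.hasDerivAt_rpow_const (Or.inl (ne_of_gt hpos))).comp x hinner
  have hdle : ∀ x ∈ Set.Ici x₀, (1/3) * (L - f x) ^ ((1:ℝ)/3 - 1) * (-(deriv f x)) ≤ -k := by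
    intro x hxm
    have hpos : 0 < L - f x := sub_pos.2 (hflt x)
    have hw : 0 < (L - f x) ^ ((1:ℝ)/3 - 1) := Real.rpow_pos_of_pos hpos _
    -- key: deriv f x * (L - f x)^(1/3 - 1) ≥ (cR^2)^{1/3}
    have hkey : (cR ^ 2) ^ ((1:ℝ)/3) ≤ deriv f x * (L - f x) ^ ((1:ℝ)/3 - 1) := by
      apply le_of_pow_le_pow_left₀ (n := 3) (by norm_num)
        (mul_nonneg (hf' x).le hw.le)
      have e1 : ((cR ^ 2) ^ ((1:ℝ)/3)) ^ (3:ℕ) = cR ^ 2 := by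
        rw [← Real.rpow_natCast ((cR^2) ^ ((1:ℝ)/3)) 3, ← Real.rpow_mul (by positivity)]
        norm_num
      have e2 : ((L - f x) ^ ((1:ℝ)/3 - 1)) ^ (3:ℕ) = ((L - f x) ^ (2:ℕ))⁻¹ := by
        rw [← Real.rpow_natCast ((L - f x) ^ ((1:ℝ)/3 - 1)) 3, ← Real.rpow_mul hpos.le,
          ← Real.rpow_natCast (L - f x) 2, ← Real.rpow_neg hpos.le]
        norm_num
      rw [e1, mul_pow, e2, hode x, hfact (f x)]
      have habs := le_of_lt (hx₀ x hxm)
      have h2 : cR ^ 2 ≤ (a₁ + a₂ * (f x + L)) ^ 2 := by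
        rw [← sq_abs (a₁ + a₂ * (f x + L))]
        exact pow_le_pow_left₀ hcRpos.le habs 2
      have hne : (L - f x) ≠ 0 := ne_of_gt hpos
      have hid : ((f x - L) * (a₁ + a₂ * (f x + L))) ^ 2 * (((L - f x) ^ (2:ℕ))⁻¹)
          = (a₁ + a₂ * (f x + L)) ^ 2 := by
        field_simp
        ring
      rw [hid]
      exact h2
    have h3 : k * 3 ≤ deriv f x * (L - f x) ^ ((1:ℝ)/3 - 1) := by
      have hk3 : k * 3 = (cR ^ 2) ^ ((1:ℝ)/3) := by rw [hk]; ring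
      rw [hk3]; exact hkey
    nlinarith [hf' x, hw]
  -- contradiction via linear decay
  set v := fun x => (L - f x) ^ ((1:ℝ)/3) with hv
  have hvpos : ∀ x, 0 < v x := fun x => Real.rpow_pos_of_pos (sub_pos.2 (hflt x)) _
  set x₁ := x₀ + (v x₀)/k + 1 with hx₁
  have hxle : x₀ ≤ x₁ := by
    have : 0 ≤ v x₀ / k := div_nonneg (hvpos x₀).le hkpos.le
    rw [hx₁]; linarith
  have hlb := lin_bound (v := v) (v' := fun x => (1/3) * (L - f x) ^ ((1:ℝ)/3 - 1) * (-(deriv f x)))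
    (k := k) hxle (fun x _ => hd x)
    (fun x hxm => hdle x (Set.mem_of_mem_of_subset hxm (Set.Icc_subset_Ici_self)))
  have h2 : v x₁ ≤ v x₀ - k * (x₁ - x₀) := hlb
  have hterm : k * (x₁ - x₀) = v x₀ + k := by
    rw [hx₁]; field_simp; ring
  rw [hterm] at h2
  linarith [hvpos x₁, hvpos x₀]

/-- A continuous nonvanishing function on ℝ has constant sign. -/
lemma pos_or_neg {φ : ℝ → ℝ} (hc : Continuous φ) (h0 : ∀ x, φ x ≠ 0) :
    (∀ x, 0 < φ x) ∨ (∀ x, φ x < 0) := by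
  by_contra hcon
  push_neg at hcon
  obtain ⟨⟨x₁, hx₁⟩, ⟨x₂, hx₂⟩⟩ := hcon
  have h1 : φ x₁ < 0 := lt_of_le_of_ne hx₁ (h0 x₁)
  have h2 : 0 < φ x₂ := lt_of_le_of_ne hx₂ (Ne.symm (h0 x₂))
  have := intermediate_value_univ x₁ x₂ hc
  obtain ⟨x, hx⟩ := this ⟨h1.le, h2.le⟩
  exact h0 x hx

/-- Reflection: if g solves the `g`-type ODE, then `y ↦ -g (-y)` solves the `f`-type ODE. -/
lemma reflect_facts (a₀ a₁ a₂ : ℝ) (g : ℝ → ℝ) (hg : Differentiable ℝ g)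
    (hg' : ∀ y, 0 < deriv g y)
    (hode : ∀ y, deriv g y ^ 3 = (a₀ - a₁ * g y + a₂ * g y ^ 2) ^ 2) :
    ∃ w : ℝ → ℝ, Differentiable ℝ w ∧ (∀ y, 0 < deriv w y) ∧
      (∀ y, deriv w y ^ 3 = (a₀ + a₁ * w y + a₂ * w y ^ 2) ^ 2) ∧
      (∀ y, a₀ + a₁ * w y + a₂ * w y ^ 2 = a₀ - a₁ * g (-y) + a₂ * g (-y) ^ 2) := by
  refine ⟨fun y => -g (-y), ?_, ?_, ?_, ?_⟩
  all_goals {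
    have hw : ∀ y : ℝ, HasDerivAt (fun y => -g (-y)) (deriv g (-y)) y := by
      intro y
      have h1 : HasDerivAt (fun y : ℝ => g (-y)) (deriv g (-y) * (-1)) y :=
        ((hg (-y)).hasDerivAt).comp y (hasDerivAt_neg y)
      have h2 := h1.neg
      simp only [mul_neg, mul_one, neg_neg] at h2
      exact h2
    first
    | exact fun y => (hw y).differentiableAt
    | (intro y; rw [(hw y).deriv]; exact hg' (-y))
    | (intro y; rw [(hw y).deriv, hode (-y)]; ring)
    | (intro y; ring)
  }

/-- Two global increasing solutions of the same ODE with opposite signs of Q are impossible. -/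
lemma no_mixed (a₀ a₁ a₂ : ℝ) (u w : ℝ → ℝ)
    (hu : Differentiable ℝ u) (hw : Differentiable ℝ w)
    (hu' : ∀ x, 0 < deriv u x) (hw' : ∀ x, 0 < deriv w x)
    (huode : ∀ x, deriv u x ^ 3 = (a₀ + a₁ * u x + a₂ * u x ^ 2) ^ 2)
    (hwode : ∀ x, deriv w x ^ 3 = (a₀ + a₁ * w x + a₂ * w x ^ 2) ^ 2)
    (hQu : ∀ x, 0 < a₀ + a₁ * u x + a₂ * u x ^ 2)
    (hQw : ∀ x, a₀ + a₁ * w x + a₂ * w x ^ 2 < 0) : False := by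
  rcases lt_trichotomy a₂ 0 with h2 | h2 | h2
  · -- a₂ < 0 : apply fwd to u with negated coefficients
    apply fwd (-a₀) (-a₁) (-a₂) u hu hu'
      (fun x => by rw [huode x]; ring)
      (fun x => by have := hQu x; nlinarith)
      (Or.inl (by linarith))
  · -- a₂ = 0
    rcases lt_trichotomy a₁ 0 with h1 | h1 | h1
    · -- reflect w, getting coefficients (a₀, -a₁, 0)
      obtain ⟨w', hw'd, hw'p, hw'ode, hw'Q⟩ := reflect_facts a₀ (-a₁) a₂ w hw hw'
        (fun y => by rw [hwode y]; ring_nf)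
      apply fwd a₀ (-a₁) a₂ w' hw'd hw'p hw'ode
        (fun y => by rw [hw'Q y]; have := hQw (-y); nlinarith [hQw (-y)])
        (Or.inr ⟨h2, by linarith⟩)
    · -- a₂ = 0, a₁ = 0 : Q is the constant a₀
      have c1 := hQu 0; have c2 := hQw 0
      rw [h2, h1] at c1 c2
      simp at c1 c2
      linarith
    · exact fwd a₀ a₁ a₂ w hw hw' hwode hQw (Or.inr ⟨h2, h1⟩)
  · exact fwd a₀ a₁ a₂ w hw hw' hwode hQw (Or.inl h2)

lemma sqrt_cubed {a A : ℝ} (ha : 0 < a) (h : a ^ 3 = A ^ 2) (hA : 0 < A) :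
    Real.sqrt a ^ 3 = A := by
  have hs : Real.sqrt a ^ 2 = a := Real.sq_sqrt ha.le
  have h6 : (Real.sqrt a ^ 3) ^ 2 = A ^ 2 := by
    have he : (Real.sqrt a ^ 3) ^ 2 = (Real.sqrt a ^ 2) ^ 3 := by ring
    rw [he, hs, h]
  have hpos : 0 < Real.sqrt a ^ 3 := by positivity
  have hfac : (Real.sqrt a ^ 3 - A) * (Real.sqrt a ^ 3 + A) = 0 := by linear_combination h6
  rcases mul_eq_zero.1 hfac with h' | h'
  · linarith
  · linarith

lemma sigma_exists (f g : ℝ → ℝ) (a₀ a₁ a₂ : ℝ)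
    (hf : Differentiable ℝ f) (hg : Differentiable ℝ g)
    (hf' : ∀ x, 0 < deriv f x) (hg' : ∀ y, 0 < deriv g y)
    (hfode : ∀ x, deriv f x ^ 3 = (a₀ + a₁ * f x + a₂ * f x ^ 2) ^ 2)
    (hgode : ∀ y, deriv g y ^ 3 = (a₀ - a₁ * g y + a₂ * g y ^ 2) ^ 2) :
    ∃ σ : ℝ, σ ^ 2 = 1 ∧
      (∀ x, Real.sqrt (deriv f x) ^ 3 = σ * (a₀ + a₁ * f x + a₂ * f x ^ 2)) ∧
      (∀ y, Real.sqrt (deriv g y) ^ 3 = σ * (a₀ - a₁ * g y + a₂ * g y ^ 2)) := by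
  have hAne : ∀ x, a₀ + a₁ * f x + a₂ * f x ^ 2 ≠ 0 := by
    intro x hz
    have := hfode x
    rw [hz] at this
    simp at this
    have := hf' x
    nlinarith [this]
  have hCne : ∀ y, a₀ - a₁ * g y + a₂ * g y ^ 2 ≠ 0 := by
    intro y hz
    have := hgode y
    rw [hz] at this
    simp at this
    have := hg' y
    nlinarith [this]
  have hAc : Continuous (fun x => a₀ + a₁ * f x + a₂ * f x ^ 2) := by
    have := hf.continuous; continuity
  have hCc : Continuous (fun y => a₀ - a₁ * g y + a₂ * g y ^ 2) := by
    have := hg.continuous; continuity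
  rcases pos_or_neg hAc hAne with hA | hA <;> rcases pos_or_neg hCc hCne with hC | hC
  · -- both positive, σ = 1
    refine ⟨1, by norm_num, fun x => ?_, fun y => ?_⟩
    · rw [one_mul]; exact sqrt_cubed (hf' x) (hfode x) (hA x)
    · rw [one_mul]; exact sqrt_cubed (hg' y) (hgode y) (hC y)
  · -- A > 0, C < 0 : impossible
    exfalso
    obtain ⟨w, hwd, hwp, hwode, hwQ⟩ := reflect_facts a₀ a₁ a₂ g hg hg' hgode
    exact no_mixed a₀ a₁ a₂ f w hf hwd hf' hwp hfode hwode hA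
      (fun y => by rw [hwQ y]; exact hC (-y))
  · -- A < 0, C > 0 : impossible
    exfalso
    obtain ⟨w, hwd, hwp, hwode, hwQ⟩ := reflect_facts a₀ a₁ a₂ g hg hg' hgode
    exact no_mixed a₀ a₁ a₂ w f hwd hf hwp hf' hwode hfode
      (fun y => by rw [hwQ y]; exact hC (-y)) hA
  · -- both negative, σ = -1
    refine ⟨-1, by norm_num, fun x => ?_, fun y => ?_⟩
    · have := sqrt_cubed (hf' x) (by rw [hfode x]; ring :
        deriv f x ^ 3 = (-(a₀ + a₁ * f x + a₂ * f x ^ 2)) ^ 2) (by linarith [hA x])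
      linarith [this]
    · have := sqrt_cubed (hg' y) (by rw [hgode y]; ring :
        deriv g y ^ 3 = (-(a₀ - a₁ * g y + a₂ * g y ^ 2)) ^ 2) (by linarith [hC y])
      linarith [this]

lemma aux_eq1 (a₀ a₁ a₂ σ : ℝ) (hσ2 : σ ^ 2 = 1) (f g S T : ℝ → ℝ)
    (hfd : ∀ x, HasDerivAt f (S x ^ 2) x)
    (hgd : ∀ y, HasDerivAt g (T y ^ 2) y)
    (hS : ∀ x, HasDerivAt S (σ * (a₁ + 2 * a₂ * f x) / 3) x)
    (hT : ∀ y, HasDerivAt T (σ * (-a₁ + 2 * a₂ * g y) / 3) y)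
    (hSpos : ∀ x, 0 < S x) (hTpos : ∀ y, 0 < T y)
    (hs3 : ∀ x, S x ^ 3 = σ * (a₀ + a₁ * f x + a₂ * f x ^ 2))
    (ht3 : ∀ y, T y ^ 3 = σ * (a₀ - a₁ * g y + a₂ * g y ^ 2))
    (U : Set (ℝ × ℝ)) (hU : IsOpen U)
    (hpos : ∀ x y, (x, y) ∈ U → 0 < f x + g y)
    (p : ℝ → ℝ → ℝ)
    (hp : ∀ x y, (x, y) ∈ U → p x y = 3 / 2 * S x * T y / (f x + g y)) :
    ∀ x y, (x, y) ∈ U → px (px p) x y = -(4/3) * p x y * py p x y := by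
  have hUx : ∀ y : ℝ, IsOpen {u : ℝ | (u, y) ∈ U} :=
    fun y => hU.preimage (continuous_id.prodMk continuous_const)
  -- first derivative in x, valid at every point of U
  have hpx : ∀ x y, (x, y) ∈ U → px p x y
      = (3 / 2 * (σ * (a₁ + 2 * a₂ * f x) / 3) * T y * (f x + g y)
          - 3 / 2 * S x * T y * S x ^ 2) / (f x + g y) ^ 2 := by
    intro x y hxy
    have hev : (fun u => p u y) =ᶠ[nhds x] (fun u => 3 / 2 * S u * T y / (f u + g y)) := by
      filter_upwards [(hUx y).mem_nhds hxy] with u hu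
      exact hp u y hu
    have hne : f x + g y ≠ 0 := ne_of_gt (hpos x y hxy)
    have hnum : HasDerivAt (fun u => 3 / 2 * S u * T y)
        (3 / 2 * (σ * (a₁ + 2 * a₂ * f x) / 3) * T y) x :=
      ((hS x).const_mul (3/2)).mul_const (T y)
    have hden : HasDerivAt (fun u => f u + g y) (S x ^ 2) x := (hfd x).add_const (g y)
    have hdiv := hnum.div hden hne
    rw [px, hev.deriv_eq]; exact hdiv.deriv
  -- first derivative in y, valid at every point of U
  have hpy : ∀ x y, (x, y) ∈ U → py p x y
      = (3 / 2 * S x * (σ * (-a₁ + 2 * a₂ * g y) / 3) * (f x + g y)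
          - 3 / 2 * S x * T y * T y ^ 2) / (f x + g y) ^ 2 := by
    intro x y hxy
    have hUy : IsOpen {v : ℝ | (x, v) ∈ U} := hU.preimage (continuous_const.prodMk continuous_id)
    have hev : (fun v => p x v) =ᶠ[nhds y] (fun v => 3 / 2 * S x * T v / (f x + g v)) := by
      filter_upwards [hUy.mem_nhds hxy] with v hv
      exact hp x v hv
    have hne : f x + g y ≠ 0 := ne_of_gt (hpos x y hxy)
    have hnum : HasDerivAt (fun v => 3 / 2 * S x * T v)
        (3 / 2 * S x * (σ * (-a₁ + 2 * a₂ * g y) / 3)) y := (hT y).const_mul (3 / 2 * S x)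
    have hden : HasDerivAt (fun v => f x + g v) (T y ^ 2) y := (hgd y).const_add (f x)
    have hdiv := hnum.div hden hne
    rw [py, hev.deriv_eq]; exact hdiv.deriv
  -- second derivative
  intro x y hxy
  have hne : f x + g y ≠ 0 := ne_of_gt (hpos x y hxy)
  have hev2 : (fun u => px p u y) =ᶠ[nhds x]
      (fun u => (3 / 2 * (σ * (a₁ + 2 * a₂ * f u) / 3) * T y * (f u + g y)
          - 3 / 2 * S u * T y * S u ^ 2) / (f u + g y) ^ 2) := by
    filter_upwards [(hUx y).mem_nhds hxy] with u hu
    exact hpx u y hu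
  have hB : HasDerivAt (fun u => σ * (a₁ + 2 * a₂ * f u) / 3) (σ * (2 * a₂ * S x ^ 2) / 3) x :=
    ((((hfd x).const_mul (2 * a₂)).const_add a₁).const_mul σ).div_const 3
  have hN2 : HasDerivAt (fun u => 3 / 2 * (σ * (a₁ + 2 * a₂ * f u) / 3) * T y)
      (3 / 2 * (σ * (2 * a₂ * S x ^ 2) / 3) * T y) x := (hB.const_mul (3/2)).mul_const (T y)
  have hN3 : HasDerivAt (fun u => 3 / 2 * (σ * (a₁ + 2 * a₂ * f u) / 3) * T y * (f u + g y))
      (3 / 2 * (σ * (2 * a₂ * S x ^ 2) / 3) * T y * (f x + g y)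
        + 3 / 2 * (σ * (a₁ + 2 * a₂ * f x) / 3) * T y * S x ^ 2) x :=
    hN2.mul ((hfd x).add_const (g y))
  have hM1 : HasDerivAt (fun u => 3 / 2 * S u * T y)
      (3 / 2 * (σ * (a₁ + 2 * a₂ * f x) / 3) * T y) x :=
    ((hS x).const_mul (3/2)).mul_const (T y)
  have hM : HasDerivAt (fun u => 3 / 2 * S u * T y * S u ^ 2)
      (3 / 2 * (σ * (a₁ + 2 * a₂ * f x) / 3) * T y * S x ^ 2
        + 3 / 2 * S x * T y * ((2:ℕ) * S x ^ 1 * (σ * (a₁ + 2 * a₂ * f x) / 3))) x :=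
    hM1.mul ((hS x).pow 2)
  have hNum := hN3.sub hM
  have hDen : HasDerivAt (fun u => (f u + g y) ^ 2)
      ((2:ℕ) * (f x + g y) ^ 1 * S x ^ 2) x := ((hfd x).add_const (g y)).pow 2
  have hden2 : (f x + g y) ^ 2 ≠ 0 := pow_ne_zero 2 hne
  have hdiv2 := hNum.div hDen hden2
  simp only [Pi.div_def, Pi.sub_def] at hdiv2
  rw [px, hev2.deriv_eq, hdiv2.deriv, hpy x y hxy, hp x y hxy]
  have hsx := hs3 x
  have hty := ht3 y
  have hspos := hSpos x
  have htpos := hTpos y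
  have hFG := hpos x y hxy
  set s := S x; set t := T y; set F := f x; set G := g y
  field_simp
  linear_combination 12 * hsx - 12 * hty

lemma aux_eq3 (a₁ a₂ σ : ℝ) (f g S T : ℝ → ℝ)
    (hfd : ∀ x, HasDerivAt f (S x ^ 2) x)
    (hgd : ∀ y, HasDerivAt g (T y ^ 2) y)
    (hT : ∀ y, HasDerivAt T (σ * (-a₁ + 2 * a₂ * g y) / 3) y)
    (hSpos : ∀ x, 0 < S x) (hTpos : ∀ y, 0 < T y)
    (U : Set (ℝ × ℝ)) (hU : IsOpen U)
    (hpos : ∀ x y, (x, y) ∈ U → 0 < f x + g y)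
    (p : ℝ → ℝ → ℝ)
    (hp : ∀ x y, (x, y) ∈ U → p x y = 3 / 2 * S x * T y / (f x + g y)) :
    ∀ x y, (x, y) ∈ U →
      px (py (fun x y => Real.log (p x y))) x y = (4/9) * p x y ^ 2 := by
  have hUx : ∀ y : ℝ, IsOpen {u : ℝ | (u, y) ∈ U} :=
    fun y => hU.preimage (continuous_id.prodMk continuous_const)
  have hpylog : ∀ x y, (x, y) ∈ U → py (fun a b => Real.log (p a b)) x y
      = σ * (-a₁ + 2 * a₂ * g y) / 3 / T y - T y ^ 2 / (f x + g y) := by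
    intro x y hxy
    have hUy : IsOpen {v : ℝ | (x, v) ∈ U} := hU.preimage (continuous_const.prodMk continuous_id)
    have hev : (fun v => Real.log (p x v)) =ᶠ[nhds y]
        (fun v => Real.log (3 / 2 * S x * T v / (f x + g v))) := by
      filter_upwards [hUy.mem_nhds hxy] with v hv
      rw [hp x v hv]
    have hne : f x + g y ≠ 0 := ne_of_gt (hpos x y hxy)
    have hnum : HasDerivAt (fun v => 3 / 2 * S x * T v)
        (3 / 2 * S x * (σ * (-a₁ + 2 * a₂ * g y) / 3)) y := (hT y).const_mul (3 / 2 * S x)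
    have hden : HasDerivAt (fun v => f x + g v) (T y ^ 2) y := (hgd y).const_add (f x)
    have hdiv := hnum.div hden hne
    have hvalne : 3 / 2 * S x * T y / (f x + g y) ≠ 0 := by
      have := hSpos x; have := hTpos y; have := hpos x y hxy; positivity
    have hlog := hdiv.log hvalne
    show deriv (fun v => Real.log (p x v)) y = _
    simp only [Pi.div_apply] at hlog
    rw [hev.deriv_eq, hlog.deriv]
    have hS := hSpos x; have hT := hTpos y; have hFG := hpos x y hxy
    field_simp
  intro x y hxy
  have hne : f x + g y ≠ 0 := ne_of_gt (hpos x y hxy)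
  have hev2 : (fun u => py (fun a b => Real.log (p a b)) u y) =ᶠ[nhds x]
      (fun u => σ * (-a₁ + 2 * a₂ * g y) / 3 / T y - T y ^ 2 / (f u + g y)) := by
    filter_upwards [(hUx y).mem_nhds hxy] with u hu
    exact hpylog u y hu
  have hden : HasDerivAt (fun u => f u + g y) (S x ^ 2) x := (hfd x).add_const (g y)
  have hdiv : HasDerivAt (fun u => T y ^ 2 / (f u + g y))
      ((0 * (f x + g y) - T y ^ 2 * S x ^ 2) / (f x + g y) ^ 2) x :=
    (hasDerivAt_const x (T y ^ 2)).div hden hne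
  have hfull := hdiv.const_sub (σ * (-a₁ + 2 * a₂ * g y) / 3 / T y)
  rw [px, hev2.deriv_eq, hfull.deriv, hp x y hxy]
  have hS := hSpos x; have hT := hTpos y; have hFG := hpos x y hxy
  field_simp
  ring

lemma sqrt_deriv_fact (a₀ a₁ a₂ σ : ℝ) (f : ℝ → ℝ)
    (hf : Differentiable ℝ f) (hf2 : Differentiable ℝ (deriv f))
    (hf' : ∀ x, 0 < deriv f x)
    (hs3 : ∀ x, Real.sqrt (deriv f x) ^ 3 = σ * (a₀ + a₁ * f x + a₂ * f x ^ 2)) :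
    ∀ x, HasDerivAt (fun x => Real.sqrt (deriv f x)) (σ * (a₁ + 2 * a₂ * f x) / 3) x := by
  intro x
  set S := fun x => Real.sqrt (deriv f x) with hSdef
  have hSpos : ∀ u, 0 < S u := fun u => Real.sqrt_pos.2 (hf' u)
  have hS2 : ∀ u, S u ^ 2 = deriv f u := fun u => Real.sq_sqrt (hf' u).le
  have hfdS : ∀ u, HasDerivAt f (S u ^ 2) u := fun u => (hS2 u) ▸ (hf u).hasDerivAt
  have hSd : HasDerivAt S (1 / (2 * Real.sqrt (deriv f x)) * deriv (deriv f) x) x := by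
    have houter := Real.hasDerivAt_sqrt (ne_of_gt (hf' x))
    have hinner : HasDerivAt (deriv f) (deriv (deriv f) x) x := (hf2 x).hasDerivAt
    exact houter.comp x hinner
  have hcube : HasDerivAt (fun u => S u ^ 3)
      ((3:ℕ) * S x ^ 2 * (1 / (2 * Real.sqrt (deriv f x)) * deriv (deriv f) x)) x := hSd.pow 3
  have hAd : HasDerivAt (fun u => σ * (a₀ + a₁ * f u + a₂ * f u ^ 2))
      (σ * (a₁ * S x ^ 2 + a₂ * ((2:ℕ) * f x ^ 1 * S x ^ 2))) x :=
    ((((hfdS x).const_mul a₁).const_add a₀).add (((hfdS x).pow 2).const_mul a₂)).const_mul σ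
  have hfn : (fun u => S u ^ 3) = (fun u => σ * (a₀ + a₁ * f u + a₂ * f u ^ 2)) := funext hs3
  rw [hfn] at hcube
  have huniq := hcube.unique hAd
  have hSne : S x ≠ 0 := ne_of_gt (hSpos x)
  have hw : 1 / (2 * Real.sqrt (deriv f x)) * deriv (deriv f) x
      = σ * (a₁ + 2 * a₂ * f x) / 3 := by
    have hcanc : S x ^ 2 * (3 * (1 / (2 * Real.sqrt (deriv f x)) * deriv (deriv f) x))
        = S x ^ 2 * (σ * (a₁ + 2 * a₂ * f x)) := by
      push_cast at huniq
      linear_combination huniq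
    have h3 := mul_left_cancel₀ (pow_ne_zero 2 hSne) hcanc
    linarith
  rw [hw] at hSd
  exact hSd

/-- The Roman surface of Steiner: if `(f')³ = (a₀+a₁f+a₂f²)²`, `(g')³ = (a₀-a₁g+a₂g²)²`
and `p = (3/2)√(f'g')/(f+g)` on an open set where `f+g > 0`, then `p` satisfies
`p_xx = -(4/3) p p_y`, `p_yy = -(4/3) p p_x` and `(log p)_xy = (4/9) p²`. -/
theorem roman_surface_equations (f g : ℝ → ℝ) (a₀ a₁ a₂ : ℝ)
    (hf : ContDiff ℝ (⊤ : ℕ∞) f) (hg : ContDiff ℝ (⊤ : ℕ∞) g)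
    (hf' : ∀ x, 0 < deriv f x) (hg' : ∀ y, 0 < deriv g y)
    (hfode : ∀ x, (deriv f x) ^ 3 = (a₀ + a₁ * f x + a₂ * (f x) ^ 2) ^ 2)
    (hgode : ∀ y, (deriv g y) ^ 3 = (a₀ - a₁ * g y + a₂ * (g y) ^ 2) ^ 2)
    (U : Set (ℝ × ℝ)) (hU : IsOpen U)
    (hpos : ∀ x y, (x, y) ∈ U → 0 < f x + g y)
    (p : ℝ → ℝ → ℝ)
    (hp : ∀ x y, (x, y) ∈ U →
      p x y = (3/2) * Real.sqrt (deriv f x * deriv g y) / (f x + g y)) :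
    ∀ x y, (x, y) ∈ U →
      px (px p) x y = -(4/3) * p x y * py p x y ∧
      py (py p) x y = -(4/3) * p x y * px p x y ∧
      px (py (fun x y => Real.log (p x y))) x y = (4/9) * (p x y) ^ 2 := by

  -- differentiability
  have hfd : Differentiable ℝ f := hf.differentiable (by simp)
  have hgd : Differentiable ℝ g := hg.differentiable (by simp)
  have hfd2 : Differentiable ℝ (deriv f) := by
    have h1 : ContDiff ℝ ((⊤:ℕ∞) : WithTop ℕ∞) f := hf.of_le (by simp)
    exact (contDiff_infty_iff_deriv.mp h1).2.differentiable (by simp)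
  have hgd2 : Differentiable ℝ (deriv g) := by
    have h1 : ContDiff ℝ ((⊤:ℕ∞) : WithTop ℕ∞) g := hg.of_le (by simp)
    exact (contDiff_infty_iff_deriv.mp h1).2.differentiable (by simp)
  -- the sign σ
  obtain ⟨σ, hσ2, hs3, ht3⟩ := sigma_exists f g a₀ a₁ a₂ hfd hgd hf' hg' hfode hgode
  set S := fun x => Real.sqrt (deriv f x) with hSdef
  set T := fun y => Real.sqrt (deriv g y) with hTdef
  have hSpos : ∀ x, 0 < S x := fun x => Real.sqrt_pos.2 (hf' x)
  have hTpos : ∀ y, 0 < T y := fun y => Real.sqrt_pos.2 (hg' y)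
  have hS2 : ∀ x, S x ^ 2 = deriv f x := fun x => Real.sq_sqrt (hf' x).le
  have hT2 : ∀ y, T y ^ 2 = deriv g y := fun y => Real.sq_sqrt (hg' y).le
  have hfdS : ∀ x, HasDerivAt f (S x ^ 2) x := fun x => (hS2 x) ▸ (hfd x).hasDerivAt
  have hgdT : ∀ y, HasDerivAt g (T y ^ 2) y := fun y => (hT2 y) ▸ (hgd y).hasDerivAt
  have hS : ∀ x, HasDerivAt S (σ * (a₁ + 2 * a₂ * f x) / 3) x :=
    sqrt_deriv_fact a₀ a₁ a₂ σ f hfd hfd2 hf' hs3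
  have hT : ∀ y, HasDerivAt T (σ * (-a₁ + 2 * a₂ * g y) / 3) y :=
    sqrt_deriv_fact a₀ (-a₁) a₂ σ g hgd hgd2 hg' (fun y => by rw [ht3 y]; ring)
  -- rewrite p
  have hp' : ∀ x y, (x, y) ∈ U → p x y = 3 / 2 * S x * T y / (f x + g y) := by
    intro x y hxy
    rw [hp x y hxy, Real.sqrt_mul (hf' x).le]
    ring
  -- the three equations
  intro x y hxy
  refine ⟨?_, ?_, ?_⟩
  · exact aux_eq1 a₀ a₁ a₂ σ hσ2 f g S T hfdS hgdT hS hT hSpos hTpos hs3 ht3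
      U hU hpos p hp' x y hxy
  · -- symmetric case via swapping
    have hU' : IsOpen {q : ℝ × ℝ | (q.2, q.1) ∈ U} :=
      hU.preimage (continuous_snd.prodMk continuous_fst)
    have hS' : ∀ u, HasDerivAt S (σ * (-(-a₁) + 2 * a₂ * f u) / 3) u := by
      intro u
      have h := hS u
      rwa [show σ * (a₁ + 2 * a₂ * f u) / 3 = σ * (-(-a₁) + 2 * a₂ * f u) / 3 from by ring] at h
    have h := aux_eq1 a₀ (-a₁) a₂ σ hσ2 g f T S hgdT hfdS hT hS' hTpos hSpos
      (fun u => by rw [ht3 u]; ring) (fun u => by rw [hs3 u]; ring)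
      {q : ℝ × ℝ | (q.2, q.1) ∈ U} hU'
      (fun a b hab => by have := hpos b a hab; linarith)
      (fun a b => p b a)
      (fun a b hab => by show p b a = _; rw [hp' b a hab]; ring)
      y x hxy
    exact h
  · exact aux_eq3 a₁ a₂ σ f g S T hfdS hgdT hT hSpos hTpos U hU hpos p hp' x y hxy
end

section
/- Suppose (p, V, W) solves the stationary mVN system with p nonvanishing. Then (p, V, W) with the substitutions (constraint for Kummer quartics) V = (11/8)(log p)_xx + 2((log p)_x)², W = (11/8)(log p)_yy + 2((log p)_y)², and (log p)_xy = (4/9)p², implies that p satisfies ((1/p²)(p²(p²)_y)_y)_y = ((1/p²)(p²(p²)_x)_x)_x. -/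
open scoped ContDiff

lemma keyDeriv (g : ℝ → ℝ) (hg : ContDiff ℝ (⊤ : ℕ∞) g) (hpos : ∀ t, 0 < g t) (x : ℝ) :
    deriv (fun t => 1 / g t ^ 2 * deriv (fun s => g s ^ 2 * deriv (fun r => g r ^ 2) s) t) x
    = (-16/3) * g x *
      (deriv (deriv (deriv g)) x
        - 2 * ((11/8) * deriv (deriv (fun s => Real.log (g s))) x
               + 2 * (deriv (fun s => Real.log (g s)) x) ^ 2) * deriv g x
        - g x * deriv (fun t =>
            (11/8) * deriv (deriv (fun s => Real.log (g s))) t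
            + 2 * (deriv (fun s => Real.log (g s)) t) ^ 2) x) := by
  have hg0 : ContDiff ℝ ∞ g := hg.of_le (by simp)
  have hdg : Differentiable ℝ g := hg0.differentiable (by simp)
  have hg1 : ContDiff ℝ ∞ (deriv g) := (contDiff_infty_iff_deriv.mp hg0).2
  have hdg1 : Differentiable ℝ (deriv g) := hg1.differentiable (by simp)
  have hg2 : ContDiff ℝ ∞ (deriv (deriv g)) := (contDiff_infty_iff_deriv.mp hg1).2
  have hdg2 : Differentiable ℝ (deriv (deriv g)) := hg2.differentiable (by simp)
  have hne : ∀ t, g t ≠ 0 := fun t => (hpos t).ne'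
  have hsqA : ∀ t, HasDerivAt (fun s => g s ^ 2) (2 * g t * deriv g t) t := by
    intro t
    have := ((hdg t).hasDerivAt).fun_pow 2
    refine this.congr_deriv ?_
    push_cast; ring
  have e1 : deriv (fun r => g r ^ 2) = fun t => 2 * g t * deriv g t :=
    funext fun t => (hsqA t).deriv
  have e2 : (fun s => g s ^ 2 * deriv (fun r => g r ^ 2) s)
      = fun s => g s ^ 2 * (2 * g s * deriv g s) := by
    simp only [e1]
  have hprodA : ∀ t, HasDerivAt (fun s => g s ^ 2 * (2 * g s * deriv g s))
      (6 * g t ^ 2 * deriv g t ^ 2 + 2 * g t ^ 3 * deriv (deriv g) t) t := by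
    intro t
    have hB : HasDerivAt (fun s => 2 * g s * deriv g s)
        (2 * deriv g t * deriv g t + 2 * g t * deriv (deriv g) t) t :=
      (((hdg t).hasDerivAt).const_mul 2).fun_mul ((hdg1 t).hasDerivAt)
    have := (hsqA t).fun_mul hB
    refine this.congr_deriv ?_
    ring
  have e3 : deriv (fun s => g s ^ 2 * deriv (fun r => g r ^ 2) s)
      = fun t => 6 * g t ^ 2 * deriv g t ^ 2 + 2 * g t ^ 3 * deriv (deriv g) t := by
    rw [e2]; exact funext fun t => (hprodA t).deriv
  have e4 : (fun t => 1 / g t ^ 2 * deriv (fun s => g s ^ 2 * deriv (fun r => g r ^ 2) s) t)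
      = fun t => 6 * deriv g t ^ 2 + 2 * g t * deriv (deriv g) t := by
    funext t
    simp only [e3]
    field_simp [hne t]
  have hLHS : deriv (fun t => 1 / g t ^ 2 * deriv (fun s => g s ^ 2 * deriv (fun r => g r ^ 2) s) t) x
      = 14 * deriv g x * deriv (deriv g) x + 2 * g x * deriv (deriv (deriv g)) x := by
    rw [e4]
    have hA : HasDerivAt (fun t => 6 * deriv g t ^ 2 + 2 * g t * deriv (deriv g) t)
        (14 * deriv g x * deriv (deriv g) x + 2 * g x * deriv (deriv (deriv g)) x) x := by
      have h1 := (((hdg1 x).hasDerivAt).fun_pow 2).const_mul (6:ℝ)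
      have h2 := ((((hdg x).hasDerivAt).const_mul (2:ℝ)).fun_mul ((hdg2 x).hasDerivAt))
      have := h1.fun_add h2
      refine this.congr_deriv ?_
      push_cast; ring
    exact hA.deriv
  have l1 : deriv (fun s => Real.log (g s)) = fun t => deriv g t / g t :=
    funext fun t => (((hdg t).hasDerivAt).log (hne t)).deriv
  have l2A : ∀ t, HasDerivAt (fun s => deriv g s / g s)
      ((deriv (deriv g) t * g t - deriv g t * deriv g t) / g t ^ 2) t :=
    fun t => ((hdg1 t).hasDerivAt).div ((hdg t).hasDerivAt) (hne t)
  have l2 : deriv (deriv (fun s => Real.log (g s)))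
      = fun t => (deriv (deriv g) t * g t - deriv g t * deriv g t) / g t ^ 2 := by
    rw [l1]; exact funext fun t => (l2A t).deriv
  have eV : (fun t => (11/8) * deriv (deriv (fun s => Real.log (g s))) t
      + 2 * (deriv (fun s => Real.log (g s)) t) ^ 2)
      = fun t => (11/8) * ((deriv (deriv g) t * g t - deriv g t * deriv g t) / g t ^ 2)
        + 2 * (deriv g t / g t) ^ 2 := by
    funext t; rw [l2, l1]
  have hnum : HasDerivAt (fun t => deriv (deriv g) t * g t - deriv g t * deriv g t)
      ((deriv (deriv (deriv g)) x * g x + deriv (deriv g) x * deriv g x)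
        - (deriv (deriv g) x * deriv g x + deriv g x * deriv (deriv g) x)) x :=
    (((hdg2 x).hasDerivAt).mul ((hdg x).hasDerivAt)).sub
      (((hdg1 x).hasDerivAt).mul ((hdg1 x).hasDerivAt))
  have hfrac := hnum.fun_div (hsqA x) (pow_ne_zero 2 (hne x))
  have hsq2 := (l2A x).fun_pow 2
  have hVd := (hfrac.const_mul ((11:ℝ)/8)).fun_add (hsq2.const_mul (2:ℝ))
  rw [hLHS, eV, hVd.deriv]
  simp only [l2]
  simp only [l1]
  have ha : g x ≠ 0 := hne x
  set a := g x
  set b := deriv g x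
  set c := deriv (deriv g) x
  set d := deriv (deriv (deriv g)) x
  push_cast
  field_simp
  ring

/-- Kummer quartics: if positive `p` satisfies `(log p)_xy = (4/9)p²` and, with
`V = (11/8)(log p)_xx + 2((log p)_x)²`, `W = (11/8)(log p)_yy + 2((log p)_y)²`,
the triple `(p, V, W)` solves the stationary mVN system, then
`((1/p²)(p²(p²)_y)_y)_y = ((1/p²)(p²(p²)_x)_x)_x`. -/
theorem kummer_quartic_equation (p V W : ℝ → ℝ → ℝ)
    (hp : Smooth2 p) (hpos : ∀ x y, 0 < p x y)
    (hxy : ∀ x y, px (py (fun x y => Real.log (p x y))) x y = (4/9) * (p x y) ^ 2)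
    (hV : ∀ x y, V x y = (11/8) * px (px (fun x y => Real.log (p x y))) x y
      + 2 * (px (fun x y => Real.log (p x y)) x y) ^ 2)
    (hW : ∀ x y, W x y = (11/8) * py (py (fun x y => Real.log (p x y))) x y
      + 2 * (py (fun x y => Real.log (p x y)) x y) ^ 2)
    (hmVN1 : ∀ x y, px (px (px p)) x y - 2 * V x y * px p x y - p x y * px V x y =
      py (py (py p)) x y - 2 * W x y * py p x y - p x y * py W x y)
    (hmVN2 : ∀ x y, py V x y = (3/2) * px (fun x y => (p x y) ^ 2) x y)
    (hmVN3 : ∀ x y, px W x y = (3/2) * py (fun x y => (p x y) ^ 2) x y) :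
    ∀ x y,
      py (fun x y => (1 / (p x y) ^ 2) *
        py (fun x y => (p x y) ^ 2 * py (fun x y => (p x y) ^ 2) x y) x y) x y =
      px (fun x y => (1 / (p x y) ^ 2) *
        px (fun x y => (p x y) ^ 2 * px (fun x y => (p x y) ^ 2) x y) x y) x y := by
  intro x y
  have hgx : ContDiff ℝ (⊤ : ℕ∞) (fun t => p t y) := hp.comp (contDiff_id.prodMk contDiff_const)
  have hgy : ContDiff ℝ (⊤ : ℕ∞) (fun t => p x t) := hp.comp (contDiff_const.prodMk contDiff_id)
  have Hx := keyDeriv (fun t => p t y) hgx (fun t => hpos t y) x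
  have Hy := keyDeriv (fun t => p x t) hgy (fun t => hpos x t) y
  have hVfun : (fun t => V t y) = (fun t =>
      (11/8) * deriv (deriv (fun s => Real.log (p s y))) t
      + 2 * (deriv (fun s => Real.log (p s y)) t) ^ 2) :=
    funext fun t => hV t y
  have hWfun : (fun t => W x t) = (fun t =>
      (11/8) * deriv (deriv (fun s => Real.log (p x s))) t
      + 2 * (deriv (fun s => Real.log (p x s)) t) ^ 2) :=
    funext fun t => hW x t
  have hpxV : px V x y = deriv (fun t =>
      (11/8) * deriv (deriv (fun s => Real.log (p s y))) t
      + 2 * (deriv (fun s => Real.log (p s y)) t) ^ 2) x := by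
    show deriv (fun t => V t y) x = _
    rw [hVfun]
  have hpyW : py W x y = deriv (fun t =>
      (11/8) * deriv (deriv (fun s => Real.log (p x s))) t
      + 2 * (deriv (fun s => Real.log (p x s)) t) ^ 2) y := by
    show deriv (fun t => W x t) y = _
    rw [hWfun]
  have hE := hmVN1 x y
  rw [hV x y, hW x y, hpxV, hpyW] at hE
  show deriv (fun t => 1 / p x t ^ 2 * deriv (fun s => p x s ^ 2 * deriv (fun r => p x r ^ 2) s) t) y
    = deriv (fun t => 1 / p t y ^ 2 * deriv (fun s => p s y ^ 2 * deriv (fun r => p r y ^ 2) s) t) x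
  rw [Hx, Hy]
  have hE' :
      (deriv (deriv (deriv (fun t => p t y))) x
        - 2 * ((11/8) * deriv (deriv (fun s => Real.log (p s y))) x
               + 2 * (deriv (fun s => Real.log (p s y)) x) ^ 2) * deriv (fun t => p t y) x
        - p x y * deriv (fun t =>
            (11/8) * deriv (deriv (fun s => Real.log (p s y))) t
            + 2 * (deriv (fun s => Real.log (p s y)) t) ^ 2) x)
      = (deriv (deriv (deriv (fun t => p x t))) y
        - 2 * ((11/8) * deriv (deriv (fun s => Real.log (p x s))) y
               + 2 * (deriv (fun s => Real.log (p x s)) y) ^ 2) * deriv (fun t => p x t) y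
        - p x y * deriv (fun t =>
            (11/8) * deriv (deriv (fun s => Real.log (p x s))) t
            + 2 * (deriv (fun s => Real.log (p x s)) t) ^ 2) y) := hE
  rw [hE']
end
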